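/- arXiv:1708.03633 — 6 statements merged into one kernel-verified Lean document; each statement's English description precedes it below -/
import Mathlib

section
/- Let P = Q_1 ⊕ ⋯ ⊕ Q_k be a ladder (each Q_i an antichain of size 1 or 2), with B_i = M^{Q_i} (so B_i = (x_{a_i}) if |Q_i|=1, and B_i the 2×2 matrix with rows (x_{b_i}, x_{a_i}), (x_{b_i}, x_{a_i}) if Q_i = {a_i, b_i}). Then M^P = Σ_{t=1}^k I_{|Q_1|} ⊗ ⋯ ⊗ I_{|Q_{t-1}|} ⊗ B_t ⊗ J_{|Q_{t+1}|} ⊗ ⋯ ⊗ J_{|Q_k|}, where J_m denotes the m×m anti-diagonal matrix of ones. -/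
open Matrix Kronecker
open scoped Classical

namespace PromoMC

/-- A listing of the elements of a finite set `α`. -/
abbrev Listing (α : Type*) [Fintype α] := Fin (Fintype.card α) ≃ α

/-- `π` is a linear extension of the poset `α`: `π i < π j` in `α` implies `i < j`. -/
def IsLinExt {α : Type*} [Fintype α] [PartialOrder α] (π : Listing α) : Prop :=
  ∀ i j, π i < π j → i < j

variable {α : Type*} [Fintype α] [PartialOrder α]

/-- The operator `τ_i`: swap positions `i` and `i+1` (0-indexed) of a listing when
the corresponding entries are incomparable. -/
noncomputable def tau (i : ℕ) (π : Listing α) : Listing α :=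
  if h : i + 1 < Fintype.card α then
    if ¬ π ⟨i, by omega⟩ ≤ π ⟨i + 1, h⟩ ∧ ¬ π ⟨i + 1, h⟩ ≤ π ⟨i, by omega⟩ then
      (Equiv.swap (⟨i, by omega⟩ : Fin (Fintype.card α)) ⟨i + 1, h⟩).trans π
    else π
  else π

/-- The extended promotion operator `∂_i = τ_{n-1} ⋯ τ_{i+1} τ_i` (0-indexed). -/
noncomputable def promo (i : ℕ) (π : Listing α) : Listing α :=
  ((List.range (Fintype.card α)).drop i).foldl (fun σ j => tau j σ) π

/-- The set of linear extensions of a finite poset. -/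
def LinExt (α : Type*) [Fintype α] [PartialOrder α] := {π : Listing α // IsLinExt π}

noncomputable instance : Fintype (LinExt α) := by unfold LinExt; infer_instance

noncomputable instance : DecidableEq (LinExt α) := Classical.decEq _

/-- The transition matrix of the promotion Markov chain: the `(π, π')` entry is the
sum of `x (π i)` over all positions `i` with `∂_i π = π'`. -/
noncomputable def promoMatrix (x : α → ℝ) : Matrix (LinExt α) (LinExt α) ℝ :=
  fun π π' => ∑ i : Fin (Fintype.card α), if promo (i : ℕ) π.1 = π'.1 then x (π.1 i) else 0

/-- A discrete (antichain) order on a type. -/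
def Discrete (β : Type*) := β

instance {β : Type*} : PartialOrder (Discrete β) where
  le a b := a = b
  le_refl _ := rfl
  le_trans _ _ _ h h' := Eq.trans h h'
  le_antisymm _ _ h _ := h

instance {β : Type*} [Fintype β] : Fintype (Discrete β) := inferInstanceAs (Fintype β)
instance {β : Type*} [DecidableEq β] : DecidableEq (Discrete β) := inferInstanceAs (DecidableEq β)

instance {β γ : Type*} [Fintype β] [Fintype γ] : Fintype (β ⊕ₗ γ) :=
  inferInstanceAs (Fintype (β ⊕ γ))

/-- A ladder with `k` levels, the `i`-th level an antichain of size `(q i) + 1 ∈ {1, 2}`. -/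
def Ladder (k : ℕ) (q : Fin k → Fin 2) := Σ i : Fin k, Fin ((q i : ℕ) + 1)

instance {k : ℕ} {q : Fin k → Fin 2} : Fintype (Ladder k q) :=
  inferInstanceAs (Fintype (Σ i : Fin k, Fin ((q i : ℕ) + 1)))

instance {k : ℕ} {q : Fin k → Fin 2} : DecidableEq (Ladder k q) :=
  inferInstanceAs (DecidableEq (Σ i : Fin k, Fin ((q i : ℕ) + 1)))

instance {k : ℕ} {q : Fin k → Fin 2} : PartialOrder (Ladder k q) where
  le a b := a.1 < b.1 ∨ a = b
  le_refl _ := Or.inr rfl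
  le_trans := by
    rintro a b c (h | rfl) (h' | rfl)
    · exact Or.inl (h.trans h')
    · exact Or.inl h
    · exact Or.inl h'
    · exact Or.inr rfl
  le_antisymm := by
    rintro a b (h | rfl) (h' | h2)
    · exact ((lt_asymm h) h').elim
    · exact h2.symm
    · rfl
    · rfl

/-- A rooted forest: every element is covered by at most one element
(has at most one successor). -/
def IsRootedForest (α : Type*) [PartialOrder α] : Prop :=
  ∀ a b c : α, a ⋖ b → a ⋖ c → b = c

/-- A finite poset is a ladder if it is order-isomorphic to some `Ladder k q`. -/
def IsLadder (α : Type*) [Fintype α] [PartialOrder α] : Prop :=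
  ∃ (k : ℕ) (q : Fin k → Fin 2), Nonempty (α ≃o Ladder k q)

/-!
Place the ladder level by level: `position ⟨s, j⟩ = blockStart q s + j`. A linear extension
has a monotone level function with the same fibre sizes as this placement, hence lists the levels
in this order, and is `listing f` for a unique `f`: position `blockStart q s + j` holds
`⟨s, f s + j⟩`, so `f s` is the element of level `s` listed first.

`τ_i` swaps exactly when `i` is the first position of a two-element level, so `∂_i` reverses
every level starting at a position `≥ i` and fixes the others. Thus for `i` in level `t`,
`∂_i π = π'` says that `π'` agrees with `π` below `t`, reverses it above `t`, and that `i` is the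
one position of level `t` producing `f' t`; the element at that position is `(f' t).rev`. This is
the `(π, π')` entry of the `t`-th Kronecker summand.
-/

open Finset Function

section Promo
variable {α : Type*} [Fintype α] [PartialOrder α]

lemma promo_of_lt {i : ℕ} (h : i < Fintype.card α) (π : Listing α) :
    promo i π = promo (i + 1) (tau i π) := by
  unfold promo
  rw [List.drop_eq_getElem_cons (by simpa using h), List.getElem_range]
  rfl

lemma promo_of_card_le {i : ℕ} (h : Fintype.card α ≤ i) (π : Listing α) : promo i π = π := by
  unfold promo
  rw [List.drop_eq_nil_of_le (by simpa using h)]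
  rfl

end Promo

section MonotoneFin
variable {n : ℕ} {β : Type*} [LinearOrder β]

lemma apply_le_iff_lt_card_filter_of_monotone {u : Fin n → β} (hu : Monotone u) (i : Fin n)
    (b : β) : u i ≤ b ↔ (i : ℕ) < #{j | u j ≤ b} := by
  constructor
  · intro h
    have hsub : Iic i ⊆ ({j | u j ≤ b} : Finset (Fin n)) := fun j hj =>
      mem_filter.2 ⟨mem_univ j, (hu (mem_Iic.1 hj)).trans h⟩
    simpa using card_le_card hsub
  · intro h
    by_contra h'
    have hsub : ({j | u j ≤ b} : Finset (Fin n)) ⊆ Iio i := fun j hj => by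
      rw [mem_filter] at hj
      exact mem_Iio.2 (lt_of_not_ge fun hij => h' ((hu hij).trans hj.2))
    simpa using (card_le_card hsub).trans_lt' h

lemma eq_of_monotone_of_card_filter_le_eq {u v : Fin n → β} (hu : Monotone u) (hv : Monotone v)
    (h : ∀ b, #{i | u i ≤ b} = #{i | v i ≤ b}) : u = v := by
  have key : ∀ i b, u i ≤ b ↔ v i ≤ b := fun i b => by
    rw [apply_le_iff_lt_card_filter_of_monotone hu, apply_le_iff_lt_card_filter_of_monotone hv, h]
  funext i
  exact le_antisymm ((key i (v i)).2 le_rfl) ((key i (u i)).1 le_rfl)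

end MonotoneFin

lemma Fin.swap_zero_last_apply {m : ℕ} (hm : m ≤ 1) (j : Fin (m + 1)) :
    Equiv.swap 0 (Fin.last m) j = j.rev := by
  interval_cases m <;> revert j <;> decide

lemma Fin.eq_add_of_injective {m : ℕ} (hm : m ≤ 1) {g : Fin (m + 1) → Fin (m + 1)}
    (hg : Injective g) (j : Fin (m + 1)) : g j = g 0 + j := by
  interval_cases m <;> revert g j <;> decide

lemma Fin.add_rev_eq_rev_add {m : ℕ} (hm : m ≤ 1) (c j : Fin (m + 1)) : c + j.rev = c.rev + j := by
  interval_cases m <;> revert c j <;> decide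

lemma Fin.sum_ite_eq_rev {M : Type*} [AddCommMonoid M] {m : ℕ} (hm : m ≤ 1) (a b : Fin (m + 1))
    (g : Fin (m + 1) → M) :
    ∑ j, (if (if j = 0 then a.rev else a) = b then g (a + j) else 0) = g b.rev := by
  interval_cases m <;> fin_cases a <;> fin_cases b <;> simp [Fin.sum_univ_two]

lemma prod_ite_lt_eq_boole_mul {R : Type*} [CommMonoidWithZero R] {k : ℕ} (t : Fin k)
    (p r : Fin k → Prop) [DecidablePred p] [DecidablePred r] (c : Fin k → R) :
    ∏ s, (if s < t then (if p s then 1 else 0) else if s = t then c s else if r s then 1 else 0) =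
      (if ∀ s ≠ t, if s < t then p s else r s then 1 else 0) * c t := by
  rw [← mul_prod_erase univ _ (mem_univ t), if_neg (lt_irrefl t), if_pos rfl, mul_comm]
  congr 1
  have hboole : ∀ s ∈ univ.erase t,
      (if s < t then (if p s then 1 else 0) else if s = t then c s else if r s then 1 else 0) =
        if (if s < t then p s else r s) then (1 : R) else 0 := fun s hs => by
    rw [if_neg (ne_of_mem_erase hs)]
    split_ifs <;> rfl
  rw [prod_congr rfl hboole, prod_boole]
  simp only [mem_erase, mem_univ, and_true]

namespace Ladder
variable {k : ℕ} {q : Fin k → Fin 2}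

lemma lt_iff_fst_lt {a b : Ladder k q} : a < b ↔ a.1 < b.1 := by
  change (a.1 < b.1 ∨ a = b) ∧ ¬(b.1 < a.1 ∨ b = a) ↔ _
  constructor
  · rintro ⟨h | rfl, h'⟩
    · exact h
    · exact absurd (Or.inr rfl) h'
  · intro h
    refine ⟨Or.inl h, ?_⟩
    rintro (h' | rfl)
    exacts [lt_asymm h h', lt_irrefl _ h]

lemma le_iff_eq_of_fst_eq {a b : Ladder k q} (h : a.1 = b.1) : a ≤ b ↔ a = b :=
  or_iff_right (h ▸ lt_irrefl _)

lemma exists_eq_mk_of_fst_eq {a : Ladder k q} {s : Fin k} (h : a.1 = s) :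
    ∃ y, a = ⟨s, y⟩ := by
  obtain ⟨t, y⟩ := a
  cases h
  exact ⟨y, rfl⟩

lemma card_eq_sum : Fintype.card (Ladder k q) = ∑ s, ((q s : ℕ) + 1) :=
  (Fintype.card_sigma (α := fun s : Fin k => Fin ((q s : ℕ) + 1))).trans (by simp)

variable (q) in
def blockStart (s : Fin k) : ℕ := ∑ r ∈ Iio s, ((q r : ℕ) + 1)

lemma sum_Iic_eq_blockStart_add (s : Fin k) :
    ∑ r ∈ Iic s, ((q r : ℕ) + 1) = blockStart q s + ((q s : ℕ) + 1) := by
  rw [← Iio_insert, sum_insert notMem_Iio_self, add_comm, blockStart]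

lemma blockStart_add_le_of_lt {s t : Fin k} (h : s < t) :
    blockStart q s + ((q s : ℕ) + 1) ≤ blockStart q t := by
  rw [← sum_Iic_eq_blockStart_add]
  exact sum_le_sum_of_subset fun r hr => mem_Iio.2 ((mem_Iic.1 hr).trans_lt h)

lemma blockStart_add_lt_card (s : Fin k) : blockStart q s + q s < Fintype.card (Ladder k q) := by
  rw [card_eq_sum, Nat.lt_iff_add_one_le, add_assoc, ← sum_Iic_eq_blockStart_add]
  exact sum_le_sum_of_subset (subset_univ _)

lemma blockStart_strictMono : StrictMono (blockStart q) := fun _ _ h =>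
  (Nat.lt_add_of_pos_right (Nat.succ_pos _)).trans_le (blockStart_add_le_of_lt h)

lemma blockStart_add_lt_of_fst_lt {a b : Σ s, Fin ((q s : ℕ) + 1)} (h : a.1 < b.1) :
    blockStart q a.1 + a.2 < blockStart q b.1 + b.2 := by
  have := blockStart_add_le_of_lt (q := q) h
  have := a.2.isLt
  omega

lemma injective_blockStart_add :
    Injective fun a : Σ s, Fin ((q s : ℕ) + 1) => blockStart q a.1 + a.2 := by
  rintro ⟨s, j⟩ ⟨t, j'⟩ h
  rcases lt_trichotomy s t with hst | rfl | hst
  · exact absurd h (blockStart_add_lt_of_fst_lt (a := ⟨s, j⟩) (b := ⟨t, j'⟩) hst).ne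
  · simp only [add_right_inj, Fin.val_inj] at h
    rw [h]
  · exact absurd h (blockStart_add_lt_of_fst_lt (a := ⟨t, j'⟩) (b := ⟨s, j⟩) hst).ne'

noncomputable def position : (Σ s, Fin ((q s : ℕ) + 1)) ≃ Fin (Fintype.card (Ladder k q)) :=
  Equiv.ofBijective
    (fun a => ⟨blockStart q a.1 + a.2,
      (Nat.add_le_add_left a.2.is_le _).trans_lt (blockStart_add_lt_card _)⟩)
    ((Fintype.bijective_iff_injective_and_card _).2
      ⟨fun _ _ h => injective_blockStart_add (Fin.val_eq_of_eq h), (Fintype.card_fin _).symm⟩)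

@[simp] lemma val_position (a : Σ s, Fin ((q s : ℕ) + 1)) :
    (position a : ℕ) = blockStart q a.1 + a.2 := rfl

lemma position_lt_position {a b : Σ s, Fin ((q s : ℕ) + 1)} (h : a.1 < b.1) :
    position a < position b :=
  blockStart_add_lt_of_fst_lt h

lemma monotone_fst_position_symm :
    Monotone fun i : Fin (Fintype.card (Ladder k q)) => (position.symm i).1 := by
  intro i i' h
  by_contra h'
  exact absurd h (not_le.2 (by simpa using position_lt_position (not_le.1 h')))

noncomputable def listing (f : ∀ s, Fin ((q s : ℕ) + 1)) : Listing (Ladder k q) :=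
  position.symm.trans (Equiv.sigmaCongrRight fun s => Equiv.addLeft (f s))

@[simp] lemma listing_position (f : ∀ s, Fin ((q s : ℕ) + 1)) (a : Σ s, Fin ((q s : ℕ) + 1)) :
    listing f (position a) = ⟨a.1, f a.1 + a.2⟩ :=
  congrArg (Equiv.sigmaCongrRight fun s => Equiv.addLeft (f s)) (position.symm_apply_apply a)

lemma fst_listing (f : ∀ s, Fin ((q s : ℕ) + 1)) (i : Fin (Fintype.card (Ladder k q))) :
    (listing f i).1 = (position.symm i).1 := by
  rw [← position.apply_symm_apply i, listing_position, Equiv.symm_apply_apply]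

lemma isLinExt_listing (f : ∀ s, Fin ((q s : ℕ) + 1)) : IsLinExt (listing f) := fun i j h => by
  rw [lt_iff_fst_lt, fst_listing, fst_listing] at h
  simpa using position_lt_position h

lemma listing_injective : Injective (listing (q := q)) := fun f f' h => funext fun s => by
  have h0 := congr($h (position ⟨s, 0⟩))
  rw [listing_position, listing_position] at h0
  simpa using sigma_mk_injective (β := fun s => Fin ((q s : ℕ) + 1)) h0

lemma monotone_fst_of_isLinExt {π : Listing (Ladder k q)} (hπ : IsLinExt π) :
    Monotone fun i => (π i).1 := fun i i' h => by
  by_contra h'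
  exact absurd (hπ _ _ (lt_iff_fst_lt.2 (not_le.1 h'))) (not_lt.2 h)

lemma fst_eq_of_isLinExt {π : Listing (Ladder k q)} (hπ : IsLinExt π)
    (i : Fin (Fintype.card (Ladder k q))) : (π i).1 = (position.symm i).1 := by
  refine congrFun (eq_of_monotone_of_card_filter_le_eq (monotone_fst_of_isLinExt hπ)
    monotone_fst_position_symm fun s => ?_) i
  simp only [card_filter]
  rw [Equiv.sum_comp π fun a : Ladder k q => if a.1 ≤ s then 1 else 0,
    Equiv.sum_comp position.symm fun a : Σ s, Fin ((q s : ℕ) + 1) => if a.1 ≤ s then 1 else 0]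
  rfl

lemma exists_listing_eq {π : Listing (Ladder k q)} (hπ : IsLinExt π) : ∃ f, listing f = π := by
  have hlevel : ∀ s (j : Fin ((q s : ℕ) + 1)), ∃ y, π (position ⟨s, j⟩) = ⟨s, y⟩ := fun s j =>
    exists_eq_mk_of_fst_eq ((fst_eq_of_isLinExt hπ _).trans (congrArg Sigma.fst
      (position.symm_apply_apply _)))
  choose g hg using hlevel
  have hinj : ∀ s, Injective (g s) := fun s j j' h =>
    sigma_mk_injective (β := fun s => Fin ((q s : ℕ) + 1))
      (position.injective (π.injective ((hg s j).trans (h ▸ (hg s j').symm))))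
  refine ⟨fun s => g s 0, Equiv.ext fun i => ?_⟩
  obtain ⟨⟨s, j⟩, rfl⟩ := position.surjective i
  rw [listing_position, hg, Fin.eq_add_of_injective (q s).is_le (hinj s) j]

noncomputable def linExtEquiv : LinExt (Ladder k q) ≃ ∀ s, Fin ((q s : ℕ) + 1) :=
  (Equiv.ofBijective (fun f => (⟨listing f, isLinExt_listing f⟩ : LinExt (Ladder k q)))
    ⟨fun _ _ h => listing_injective (congrArg Subtype.val h), fun π =>
      (exists_listing_eq π.2).imp fun _ hf => Subtype.ext hf⟩).symm

lemma listing_linExtEquiv (π : LinExt (Ladder k q)) : listing (linExtEquiv π) = π.1 :=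
  congrArg Subtype.val (linExtEquiv.symm_apply_apply π)

lemma fst_lt_fst_of_val_position_eq_succ {a b : Σ s, Fin ((q s : ℕ) + 1)}
    (h : (position b : ℕ) = position a + 1)
    (ha : ∀ s, (q s : ℕ) = 1 → blockStart q s ≠ position a) : a.1 < b.1 := by
  rcases lt_trichotomy a.1 b.1 with hab | hab | hab
  · exact hab
  · obtain ⟨s, j⟩ := a
    obtain ⟨t, j'⟩ := b
    obtain rfl : s = t := hab
    simp only [val_position] at h ha
    have := j'.is_le
    have := (q s).is_le
    exact absurd (by omega) (ha s (by omega))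
  · have := Fin.lt_def.1 (position_lt_position hab)
    omega

lemma tau_listing_of_forall_ne (f : ∀ s, Fin ((q s : ℕ) + 1)) {i : ℕ}
    (hi : ∀ s, (q s : ℕ) = 1 → blockStart q s ≠ i) : tau i (listing f) = listing f := by
  unfold tau
  split_ifs with hn hinc
  · obtain ⟨a, ha⟩ := (position (q := q)).surjective ⟨i, by omega⟩
    obtain ⟨b, hb⟩ := (position (q := q)).surjective ⟨i + 1, hn⟩
    have hab : a.1 < b.1 :=
      fst_lt_fst_of_val_position_eq_succ (by rw [ha, hb]) (by rw [ha]; exact hi)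
    rw [← ha, ← hb, listing_position, listing_position] at hinc
    exact absurd (Or.inl hab) hinc.1
  all_goals rfl

lemma tau_listing_blockStart (f : ∀ s, Fin ((q s : ℕ) + 1)) {s : Fin k} (hs : (q s : ℕ) = 1) :
    tau (blockStart q s) (listing f) = listing (update f s (f s).rev) := by
  have hn : blockStart q s + 1 < Fintype.card (Ladder k q) := hs ▸ blockStart_add_lt_card s
  have h0 : (⟨blockStart q s, by omega⟩ : Fin (Fintype.card (Ladder k q))) = position ⟨s, 0⟩ :=
    Fin.ext (by simp)
  have h1 : (⟨blockStart q s + 1, hn⟩ : Fin (Fintype.card (Ladder k q))) =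
      position ⟨s, Fin.last _⟩ :=
    Fin.ext (by simp [hs])
  have hmk : Injective fun j : Fin ((q s : ℕ) + 1) => position ⟨s, j⟩ :=
    position.injective.comp sigma_mk_injective
  unfold tau
  rw [dif_pos hn, if_pos, h0, h1]
  · refine Equiv.ext fun i => ?_
    obtain ⟨⟨t, j⟩, rfl⟩ := position.surjective i
    rw [Equiv.trans_apply, listing_position]
    by_cases ht : t = s
    · subst ht
      rw [← hmk.map_swap, listing_position, Fin.swap_zero_last_apply (q t).is_le, update_self,
        Fin.add_rev_eq_rev_add (q t).is_le]
    · rw [Equiv.swap_apply_of_ne_of_ne (by simp [ht]) (by simp [ht]), listing_position,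
        update_of_ne ht]
  · rw [h0, h1]
    have hfst : (listing f (position ⟨s, 0⟩)).1 = (listing f (position ⟨s, Fin.last _⟩)).1 := by
      simp only [fst_listing, Equiv.symm_apply_apply]
    have hne := (listing f).injective.ne (hmk.ne (by simp [Fin.ext_iff, hs] : 0 ≠ Fin.last _))
    rw [le_iff_eq_of_fst_eq hfst, le_iff_eq_of_fst_eq hfst.symm]
    exact ⟨hne, hne.symm⟩

lemma tau_listing (f : ∀ s, Fin ((q s : ℕ) + 1)) (i : ℕ) :
    tau i (listing f) = listing fun s => if blockStart q s = i then (f s).rev else f s := by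
  by_cases h : ∃ s, (q s : ℕ) = 1 ∧ blockStart q s = i
  · obtain ⟨s, hs, rfl⟩ := h
    rw [tau_listing_blockStart f hs]
    congr 1
    funext t
    by_cases ht : t = s
    · subst ht
      simp
    · rw [update_of_ne ht, if_neg (blockStart_strictMono.injective.ne ht)]
  · simp only [not_exists, not_and] at h
    rw [tau_listing_of_forall_ne f h]
    congr 1
    funext s
    split_ifs with hs
    · -- a one-element level, on which `Fin.rev` is the identity
      have := (q s).is_le
      have := h s
      ext
      simp only [Fin.val_rev]
      omega
    · rfl

theorem promo_listing (f : ∀ s, Fin ((q s : ℕ) + 1)) (i : ℕ) :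
    promo i (listing f) = listing fun s => if i ≤ blockStart q s then (f s).rev else f s := by
  rcases lt_or_ge i (Fintype.card (Ladder k q)) with hi | hi
  · rw [promo_of_lt hi, tau_listing, promo_listing _ (i + 1)]
    congr 1
    funext s
    split_ifs <;> first | rfl | omega
  · rw [promo_of_card_le hi]
    congr 1
    funext s
    rw [if_neg (by have := blockStart_add_lt_card (q := q) s; omega)]
termination_by Fintype.card (Ladder k q) - i

lemma promo_listing_position_eq_iff (f f' : ∀ s, Fin ((q s : ℕ) + 1)) (t : Fin k)
    (j : Fin ((q t : ℕ) + 1)) :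
    promo (position ⟨t, j⟩ : ℕ) (listing f) = listing f' ↔
      (∀ s ≠ t, if s < t then f s = f' s else f s = (f' s).rev) ∧
        (if j = 0 then (f t).rev else f t) = f' t := by
  rw [promo_listing, listing_injective.eq_iff, funext_iff, val_position]
  have hne : ∀ s ≠ t, ((if blockStart q t + j ≤ blockStart q s then (f s).rev else f s) = f' s ↔
      if s < t then f s = f' s else f s = (f' s).rev) := by
    intro s hs
    rcases hs.lt_or_gt with h | h
    · rw [if_neg (by have := blockStart_add_le_of_lt (q := q) h; omega), if_pos h]
    · rw [if_pos (by have := blockStart_add_le_of_lt (q := q) h; have := j.is_le; omega),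
        if_neg h.not_gt, Fin.rev_eq_iff]
  have ht : (if blockStart q t + j ≤ blockStart q t then (f t).rev else f t) =
      if j = 0 then (f t).rev else f t := by
    simp only [add_le_iff_nonpos_right, nonpos_iff_eq_zero, Fin.val_eq_zero_iff]
  constructor
  · intro h
    exact ⟨fun s hs => (hne s hs).1 (h s), ht ▸ h t⟩
  · rintro ⟨h, h'⟩ s
    by_cases hs : s = t
    · subst hs
      exact ht ▸ h'
    · exact (hne s hs).2 (h s hs)

lemma promoMatrix_eq (x : Ladder k q → ℝ) (π π' : LinExt (Ladder k q)) :
    promoMatrix x π π' = ∑ t, (if ∀ s ≠ t, if s < t then linExtEquiv π s = linExtEquiv π' s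
      else linExtEquiv π s = (linExtEquiv π' s).rev then 1 else 0) *
        x ⟨t, (linExtEquiv π' t).rev⟩ := by
  simp only [promoMatrix]
  rw [← listing_linExtEquiv π, ← listing_linExtEquiv π']
  generalize linExtEquiv π = f, linExtEquiv π' = f'
  rw [← position.sum_comp, Fintype.sum_sigma]
  refine sum_congr rfl fun t _ => ?_
  simp only [promo_listing_position_eq_iff, listing_position, ite_and]
  by_cases hA : ∀ s ≠ t, if s < t then f s = f' s else f s = (f' s).rev
  · simp only [if_pos hA, one_mul]
    exact Fin.sum_ite_eq_rev (q t).is_le (f t) (f' t) fun y => x ⟨t, y⟩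
  · simp only [if_neg hA, zero_mul, sum_const_zero]

end Ladder

/-- For a ladder `P = Q_1 ⊕ ⋯ ⊕ Q_k` (level `s` of size `(q s)+1`),
the promotion transition matrix is the sum over `t` of the Kronecker products
`I_{|Q_1|} ⊗ ⋯ ⊗ I_{|Q_{t-1}|} ⊗ B_t ⊗ J_{|Q_{t+1}|} ⊗ ⋯ ⊗ J_{|Q_k|}` (for a
suitable ordering of the linear extensions).  Here the Kronecker product is
written entrywise: its `(f, g)` entry is the product over `s` of the `(f s, g s)`
entries of the factors; `B_s` is the matrix of the level-`s` antichain, with all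
rows equal to `(x_{b_s}, x_{a_s})` (entry `x ⟨s, (g s).rev⟩`), and `J` is the
anti-diagonal matrix of ones. -/
theorem stmt3 (k : ℕ) (q : Fin k → Fin 2) (x : Ladder k q → ℝ) :
    ∃ e : LinExt (Ladder k q) ≃ (∀ i : Fin k, Fin ((q i : ℕ) + 1)),
      ∀ π π', promoMatrix x π π' =
        ∑ t : Fin k, ∏ s : Fin k,
          (if s < t then (if e π s = e π' s then (1 : ℝ) else 0)
           else if s = t then x ⟨s, (e π' s).rev⟩
           else if e π s = (e π' s).rev then 1 else 0) := by
  refine ⟨Ladder.linExtEquiv, fun π π' => ?_⟩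
  set e := Ladder.linExtEquiv (k := k) (q := q)
  rw [Ladder.promoMatrix_eq]
  exact sum_congr rfl fun t _ => (prod_ite_lt_eq_boole_mul t (fun s => e π s = e π' s)
    (fun s => e π s = (e π' s).rev) fun s => x ⟨s, (e π' s).rev⟩).symm

end PromoMC
end

section
/- Let v_1, …, v_k be vectors with v_i ∈ ℝ^{m_i} and let c_0 = 0, c_1, …, c_k be scalars, with matrices B_i of size m_i × m_i and J_m the anti-diagonal identity, satisfying B_{m+1} v_{m+1} + c_m J_{m_{m+1}} v_{m+1} = c_{m+1} v_{m+1} for all 0 ≤ m ≤ k−1. Then the matrix M = Σ_{t=1}^k I_{m_1} ⊗ ⋯ ⊗ I_{m_{t-1}} ⊗ B_t ⊗ J_{m_{t+1}} ⊗ ⋯ ⊗ J_{m_k} satisfies M(v_1 ⊗ ⋯ ⊗ v_k) = c_k (v_1 ⊗ ⋯ ⊗ v_k). -/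
open Matrix Kronecker
open scoped Classical

namespace PromoMC

variable {α : Type*} [Fintype α] [PartialOrder α]

/-- The `n × n` anti-diagonal matrix of ones. -/
def antidiag (n : ℕ) : Matrix (Fin n) (Fin n) ℝ :=
  fun i j => if i = j.rev then 1 else 0

/-- Let `v_i ∈ ℝ^{m_i}`, scalars `c_0 = 0, c_1, …, c_k` and matrices
`B_i` of size `m_i × m_i` satisfy `B_{t+1} v_{t+1} + c_t J_{m_{t+1}} v_{t+1} = c_{t+1} v_{t+1}`
for all `t`.  Then `M = Σ_t I_{m_1} ⊗ ⋯ ⊗ I_{m_{t-1}} ⊗ B_t ⊗ J_{m_{t+1}} ⊗ ⋯ ⊗ J_{m_k}`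
(written entrywise, the `(f,g)` entry being the product of the entries of the
factors) satisfies `M (v_1 ⊗ ⋯ ⊗ v_k) = c_k (v_1 ⊗ ⋯ ⊗ v_k)`. -/
theorem stmt5 (k : ℕ) (m : Fin k → ℕ) (v : ∀ i : Fin k, Fin (m i) → ℝ)
    (B : ∀ i : Fin k, Matrix (Fin (m i)) (Fin (m i)) ℝ) (c : Fin (k + 1) → ℝ)
    (hc0 : c 0 = 0)
    (h : ∀ t : Fin k,
      (B t).mulVec (v t) + c t.castSucc • (antidiag (m t)).mulVec (v t)
        = c t.succ • v t) :
    Matrix.mulVec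
      (fun f g : ∀ i : Fin k, Fin (m i) =>
        ∑ t : Fin k, ∏ s : Fin k,
          (if s < t then (if f s = g s then (1 : ℝ) else 0)
           else if s = t then B s (f s) (g s)
           else antidiag (m s) (f s) (g s)))
      (fun f => ∏ i : Fin k, v i (f i))
      = c (Fin.last k) • (fun f => ∏ i : Fin k, v i (f i)) := by
  funext f
  have hred : ∀ t : Fin k,
      (∑ g : ∀ i : Fin k, Fin (m i), (∏ s : Fin k,
        (if s < t then (if f s = g s then (1 : ℝ) else 0)
         else if s = t then B s (f s) (g s)
         else antidiag (m s) (f s) (g s))) * ∏ i : Fin k, v i (g i))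
      = ∏ s : Fin k, (if s < t then v s (f s)
          else if s = t then (B s).mulVec (v s) (f s)
          else (antidiag (m s)).mulVec (v s) (f s)) := by
    intro t
    have : ∀ g : ∀ i : Fin k, Fin (m i),
        (∏ s : Fin k,
          (if s < t then (if f s = g s then (1 : ℝ) else 0)
           else if s = t then B s (f s) (g s)
           else antidiag (m s) (f s) (g s))) * ∏ i : Fin k, v i (g i)
        = ∏ s : Fin k,
          ((if s < t then (if f s = g s then (1 : ℝ) else 0)
           else if s = t then B s (f s) (g s)
           else antidiag (m s) (f s) (g s)) * v s (g s)) := by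
      intro g; rw [← Finset.prod_mul_distrib]
    rw [Finset.sum_congr rfl fun g _ => this g]
    rw [show (∑ g : ∀ i : Fin k, Fin (m i), ∏ s : Fin k,
          ((if s < t then (if f s = g s then (1 : ℝ) else 0)
           else if s = t then B s (f s) (g s)
           else antidiag (m s) (f s) (g s)) * v s (g s)))
        = ∏ s : Fin k, ∑ x : Fin (m s),
          ((if s < t then (if f s = x then (1 : ℝ) else 0)
           else if s = t then B s (f s) x
           else antidiag (m s) (f s) x) * v s x) from (Fintype.prod_sum (fun s x =>
          (if s < t then (if f s = x then (1 : ℝ) else 0)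
           else if s = t then B s (f s) x
           else antidiag (m s) (f s) x) * v s x)).symm]
    refine Finset.prod_congr rfl fun s _ => ?_
    by_cases h1 : s < t
    · simp [h1, ite_mul, Finset.sum_ite_eq]
    · by_cases h2 : s = t <;>
        simp [h1, h2, Matrix.mulVec, dotProduct]
  have key : ∀ t : Fin k,
      (∏ s : Fin k, (if s < t then v s (f s)
          else if s = t then (B s).mulVec (v s) (f s)
          else (antidiag (m s)).mulVec (v s) (f s)))
      = c t.succ * (∏ s : Fin k, (if (s : ℕ) < (t : ℕ) + 1 then v s (f s)
            else (antidiag (m s)).mulVec (v s) (f s)))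
        - c t.castSucc * (∏ s : Fin k, (if (s : ℕ) < (t : ℕ) then v s (f s)
            else (antidiag (m s)).mulVec (v s) (f s))) := by
    intro t
    have hB : (B t).mulVec (v t) (f t)
        = c t.succ * v t (f t) - c t.castSucc * (antidiag (m t)).mulVec (v t) (f t) := by
      have := congrFun (h t) (f t)
      simp only [Pi.add_apply, Pi.smul_apply, smul_eq_mul] at this
      linarith
    have e1 : ∀ (X : Fin k → ℝ), ∏ s : Fin k, X s = X t * ∏ s ∈ Finset.univ.erase t, X s :=
      fun X => (Finset.mul_prod_erase Finset.univ X (Finset.mem_univ t)).symm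
    rw [e1, e1 (fun s => if (s : ℕ) < (t : ℕ) + 1 then v s (f s)
          else (antidiag (m s)).mulVec (v s) (f s)),
        e1 (fun s => if (s : ℕ) < (t : ℕ) then v s (f s)
          else (antidiag (m s)).mulVec (v s) (f s))]
    have hE : ∀ j : ℕ, (t : ℕ) ≤ j → j ≤ (t : ℕ) + 1 →
        (∏ s ∈ Finset.univ.erase t, (if (s : ℕ) < j then v s (f s)
            else (antidiag (m s)).mulVec (v s) (f s)))
        = ∏ s ∈ Finset.univ.erase t, (if s < t then v s (f s)
            else if s = t then (B s).mulVec (v s) (f s)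
            else (antidiag (m s)).mulVec (v s) (f s)) := by
      intro j hj1 hj2
      refine Finset.prod_congr rfl fun s hs => ?_
      have hst : s ≠ t := (Finset.mem_erase.mp hs).1
      rcases lt_or_gt_of_ne hst with hlt | hgt
      · have : (s : ℕ) < j := lt_of_lt_of_le hlt hj1
        simp [hlt, this]
      · have h1 : ¬ s < t := not_lt_of_gt hgt
        have h2 : ¬ (s : ℕ) < j := by
          have : (t : ℕ) < (s : ℕ) := hgt
          omega
        simp [h1, h2, hst]
    rw [hE ((t : ℕ) + 1) (by omega) le_rfl, hE (t : ℕ) le_rfl (by omega)]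
    rw [if_neg (lt_irrefl t), if_pos rfl, if_pos (Nat.lt_succ_self (t : ℕ)),
      if_neg (lt_irrefl (t : ℕ)), hB]
    ring
  show (∑ g : ∀ i : Fin k, Fin (m i), (∑ t : Fin k, ∏ s : Fin k,
      (if s < t then (if f s = g s then (1 : ℝ) else 0)
       else if s = t then B s (f s) (g s)
       else antidiag (m s) (f s) (g s))) * ∏ i : Fin k, v i (g i))
      = c (Fin.last k) * ∏ i : Fin k, v i (f i)
  simp_rw [Finset.sum_mul]
  rw [Finset.sum_comm]
  rw [Finset.sum_congr rfl fun t _ => (hred t).trans (key t)]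
  set F : ℕ → ℝ := fun j => (if hj : j ≤ k then c ⟨j, by omega⟩ else 0)
      * ∏ s : Fin k, (if (s : ℕ) < j then v s (f s)
          else (antidiag (m s)).mulVec (v s) (f s)) with hF
  have step : ∀ t : Fin k,
      c t.succ * (∏ s : Fin k, (if (s : ℕ) < (t : ℕ) + 1 then v s (f s)
            else (antidiag (m s)).mulVec (v s) (f s)))
        - c t.castSucc * (∏ s : Fin k, (if (s : ℕ) < (t : ℕ) then v s (f s)
            else (antidiag (m s)).mulVec (v s) (f s)))
      = F ((t : ℕ) + 1) - F (t : ℕ) := by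
    intro t
    have h1 : (t : ℕ) + 1 ≤ k := t.2
    have h2 : (t : ℕ) ≤ k := le_of_lt t.2
    rw [hF]
    simp only [dif_pos h1, dif_pos h2]
    rfl
  rw [Finset.sum_congr rfl fun t _ => step t, Fin.sum_univ_eq_sum_range
      (fun i => F (i + 1) - F i) k, Finset.sum_range_sub F k]
  have hFk : F k = c (Fin.last k) * ∏ i : Fin k, v i (f i) := by
    rw [hF]; simp only [dif_pos le_rfl]
    congr 1
    refine Finset.prod_congr rfl fun s _ => ?_
    simp [s.2]
  have hF0 : F 0 = 0 := by
    rw [hF]; simp only [dif_pos (Nat.zero_le k)]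
    have : c ⟨0, by omega⟩ = c 0 := rfl
    rw [this, hc0, zero_mul]
  rw [hFk, hF0, sub_zero]

end PromoMC
end

section
/- The probability of having at most n−1 successes in k independent Bernoulli trials with success probability p, for kp ≥ n−1, is at most exp(−(kp − (n−1))²/(2kp)). -/
/-!
Exponential Markov (Chernoff) argument for the lower tail: for `t ≥ 0` every index `i ≤ n - 1`
satisfies `1 ≤ e^{t (n - 1 - i)}`, so the tail is at most `e^{t (n-1)}` times the full binomial sum
with `p` replaced by `p e^{-t}`, i.e. `e^{t (n-1)} (1 - p + p e^{-t})^k ≤ e^{t (n-1) + kp (e^{-t} - 1)}`.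
The quadratic bound `e^{-t} ≤ 1 - t + t²/2` turns the exponent into a quadratic in `t`, minimised at
`t = (kp - (n-1)) / kp`.
-/

open Finset Real

/-- `(1 + t + t²/2)(1 - t + t²/2) = 1 + t⁴/4 ≥ 1`, and `1 + t + t²/2 ≤ eᵗ`. -/
theorem Real.exp_neg_le_one_sub_add_sq_div_two {t : ℝ} (ht : 0 ≤ t) :
    exp (-t) ≤ 1 - t + t ^ 2 / 2 := by
  have hquad := quadratic_le_exp_of_nonneg ht
  have hinv : exp (-t) * exp t = 1 := by rw [← exp_add, neg_add_cancel, exp_zero]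
  nlinarith [exp_pos (-t), sq_nonneg (t ^ 2)]

theorem sum_range_choose_mul_pow_mul_pow {R : Type*} [CommSemiring R] (x y : R) {k N : ℕ}
    (hN : k < N) :
    ∑ i ∈ range N, (k.choose i : R) * x ^ i * y ^ (k - i) = (x + y) ^ k := by
  rw [add_pow]
  symm
  refine sum_subset (range_subset_range.2 hN) (fun i _ hi => ?_) |>.trans
    (sum_congr rfl fun i _ => by ring)
  rw [Nat.choose_eq_zero_of_lt (by simpa using hi), Nat.cast_zero, mul_zero]

theorem binomial_sum_range_le_exp {p t : ℝ} (hp0 : 0 ≤ p) (hp1 : p ≤ 1) (ht : 0 ≤ t) (k n : ℕ) :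
    ∑ i ∈ range n, (k.choose i : ℝ) * p ^ i * (1 - p) ^ (k - i)
      ≤ exp (t * (n - 1) + k * p * (exp (-t) - 1)) := by
  calc ∑ i ∈ range n, (k.choose i : ℝ) * p ^ i * (1 - p) ^ (k - i)
      ≤ ∑ i ∈ range n,
          exp (t * (n - 1)) * ((k.choose i : ℝ) * (p * exp (-t)) ^ i * (1 - p) ^ (k - i)) := by
        refine sum_le_sum fun i hi => ?_
        have hin : (i : ℝ) + 1 ≤ n := by exact_mod_cast mem_range.1 hi
        have hweight : 1 ≤ exp (t * (n - 1)) * exp (-t) ^ i := by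
          rw [← exp_nat_mul, ← exp_add]
          exact one_le_exp (by nlinarith)
        calc (k.choose i : ℝ) * p ^ i * (1 - p) ^ (k - i)
            ≤ (k.choose i : ℝ) * p ^ i * (1 - p) ^ (k - i) * (exp (t * (n - 1)) * exp (-t) ^ i) :=
              le_mul_of_one_le_right (by positivity) hweight
          _ = _ := by ring
    _ ≤ ∑ i ∈ range (max n (k + 1)),
          exp (t * (n - 1)) * ((k.choose i : ℝ) * (p * exp (-t)) ^ i * (1 - p) ^ (k - i)) :=
        sum_le_sum_of_subset_of_nonneg (range_mono (le_max_left _ _))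
          fun _ _ _ => by positivity
    _ = exp (t * (n - 1)) * (p * exp (-t) + (1 - p)) ^ k := by
        rw [← mul_sum, sum_range_choose_mul_pow_mul_pow _ _ (lt_max_of_lt_right k.lt_succ_self)]
    _ ≤ exp (t * (n - 1)) * exp (p * (exp (-t) - 1)) ^ k := by
        gcongr
        linarith [add_one_le_exp (p * (exp (-t) - 1))]
    _ = exp (t * (n - 1) + k * p * (exp (-t) - 1)) := by
        rw [← exp_nat_mul, ← exp_add]
        ring_nf

/-- (Chernoff bound for the binomial distribution.)  The
probability of at most `n − 1` successes in `k` independent Bernoulli trials with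
success probability `p`, when `kp ≥ n − 1`, is at most
`exp(−(kp − (n−1))²/(2kp))`. -/
theorem stmt10 (p : ℝ) (hp0 : 0 ≤ p) (hp1 : p ≤ 1) (k n : ℕ)
    (h : (n : ℝ) - 1 ≤ (k : ℝ) * p) :
    ∑ i ∈ Finset.range n, (k.choose i : ℝ) * p ^ i * (1 - p) ^ (k - i)
      ≤ Real.exp (-((k : ℝ) * p - ((n : ℝ) - 1)) ^ 2 / (2 * (k : ℝ) * p)) := by
  rcases (mul_nonneg k.cast_nonneg hp0).eq_or_lt with hμ | hμ
  · -- `k p = 0`: the right-hand side is `exp (x / 0) = 1`, the `t = 0` bound.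
    rw [show 2 * (k : ℝ) * p = 0 by linarith, div_zero, exp_zero]
    simpa [← hμ] using binomial_sum_range_le_exp hp0 hp1 le_rfl k n
  set t := ((k : ℝ) * p - (n - 1)) / (k * p)
  have ht : 0 ≤ t := div_nonneg (sub_nonneg.2 h) hμ.le
  calc _ ≤ exp (t * (n - 1) + k * p * (exp (-t) - 1)) := binomial_sum_range_le_exp hp0 hp1 ht k n
    _ ≤ exp (t * (n - 1) + k * p * (-t + t ^ 2 / 2)) := by
        gcongr
        linarith [exp_neg_le_one_sub_add_sq_div_two ht]
    _ = _ := by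
        congr 1
        simp only [t]
        field_simp
        ring
end

section
/- Let P = F ⊕ L with F a rooted forest and L a ladder, Q an upset of P. Then P \ Q is again of the form F' ⊕ L' for a rooted forest F' and a (possibly empty) ladder L'. Moreover, if L' ≠ ∅ then P \ Q has at most two maximal elements, and if L' = ∅ then for every element i of P \ Q, the set {j ∈ P\Q : i ⪯ j} is a chain. -/
open Matrix Kronecker
open scoped Classical

namespace PromoMC

variable {α : Type*} [Fintype α] [PartialOrder α]

/-!
Removing the upset `Q` from `F ⊕ L` leaves the ordinal sum of the downsets `F ∖ Q` and `L ∖ Q`.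
A downset of a rooted forest is a rooted forest, and a downset of a ladder is a ladder: its
nonempty levels are an initial segment of those of `L`. If the remaining ladder is nonempty,
every maximal element lies on its top level, which has at most two elements. Otherwise
`P ∖ Q` is a rooted forest, where the unique covers make every principal upset a chain.
-/

section RootedForest

variable {α β : Type*} [PartialOrder α] [PartialOrder β]

theorem IsRootedForest.of_orderIso (h : IsRootedForest α) (e : β ≃o α) : IsRootedForest β :=
  fun a b c hab hac =>
    e.injective <| h (e a) (e b) (e c) ((apply_covBy_apply_iff e).2 hab)
      ((apply_covBy_apply_iff e).2 hac)

theorem IsRootedForest.subtype_of_isLowerSet (h : IsRootedForest α) {S : Set α}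
    (hS : IsLowerSet S) : IsRootedForest S := by
  have hcov : ∀ a b : S, a ⋖ b → (a : α) ⋖ b := fun a b =>
    (Set.OrdConnected.apply_covBy_apply_iff (OrderEmbedding.subtype (· ∈ S))
      (by simpa [OrderEmbedding.coe_subtype] using hS.ordConnected)).2
  exact fun a b c hab hac => Subtype.ext <| h a b c (hcov a b hab) (hcov a c hac)

theorem IsRootedForest.isChain_Ici [IsStronglyAtomic α] [WellFoundedGT α]
    (h : IsRootedForest α) (i : α) : IsChain (· ≤ ·) (Set.Ici i) := by
  induction i using WellFoundedGT.induction with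
  | _ i ih =>
  intro j (hij : i ≤ j) j' (hij' : i ≤ j') hne
  rcases hij.eq_or_lt with rfl | hlt
  · exact Or.inl hij'
  rcases hij'.eq_or_lt with rfl | hlt'
  · exact Or.inr hij
  obtain ⟨c, hic, hcj⟩ := exists_covBy_le_of_lt hlt
  obtain ⟨c', hic', hcj'⟩ := exists_covBy_le_of_lt hlt'
  obtain rfl := h i c c' hic hic'
  exact ih c hic.lt hcj hcj' hne

end RootedForest

section Ladder

variable {k : ℕ} {q : Fin k → Fin 2}

theorem Ladder.eq_iff {a b : Ladder k q} : a = b ↔ a.1 = b.1 ∧ (a.2 : ℕ) = b.2 := by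
  refine ⟨fun h => h ▸ ⟨rfl, rfl⟩, fun ⟨h1, h2⟩ => ?_⟩
  exact Sigma.ext h1 ((Fin.heq_ext_iff (by rw [h1])).2 h2)

theorem Ladder.isMax_iff (a : Ladder k q) : IsMax a ↔ IsMax a.1 := by
  refine ⟨fun h j hj => ?_, fun h b hb => ?_⟩
  · by_contra hlt
    rcases h (b := ⟨j, 0⟩) (Or.inl (not_le.1 hlt)) with hja | hja
    · exact hlt hja.le
    · exact hlt (congrArg Sigma.fst hja).le
  · rcases hb with hlt | rfl
    · exact (h.not_lt hlt).elim
    · exact le_rfl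

theorem Ladder.card_isMax_le_two : Nat.card {a : Ladder k q // IsMax a} ≤ 2 := by
  let pos : {a : Ladder k q // IsMax a} → Fin 2 := fun a =>
    ⟨a.1.2, by have := a.1.2.isLt; have := (q a.1.1).isLt; omega⟩
  have hpos : Function.Injective pos := by
    rintro ⟨a, ha⟩ ⟨b, hb⟩ hab
    rw [Ladder.isMax_iff] at ha hb
    have hlevel : a.1 = b.1 := (le_total a.1 b.1).elim ha.eq_of_le (fun h => (hb.eq_of_le h).symm)
    exact Subtype.ext (Ladder.eq_iff.2 ⟨hlevel, congrArg Fin.val hab⟩)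
  simpa using Nat.card_le_card_of_injective pos hpos

theorem isLadder_of_rank {α : Type*} [Fintype α] [PartialOrder α] {m : ℕ} (f : α → Fin m)
    (hf : Function.Surjective f) (hle : ∀ a b, a ≤ b ↔ f a < f b ∨ a = b)
    (hcard : ∀ i, Fintype.card {a // f a = i} ≤ 2) : IsLadder α := by
  have hpos : ∀ i, 0 < Fintype.card {a // f a = i} := fun i =>
    Fintype.card_pos_iff.2 (let ⟨a, ha⟩ := hf i; ⟨⟨a, ha⟩⟩)
  let q : Fin m → Fin 2 := fun i => ⟨Fintype.card {a // f a = i} - 1, by have := hcard i; omega⟩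
  have e : ∀ i, {a // f a = i} ≃ Fin ((q i : ℕ) + 1) := fun i =>
    Fintype.equivFinOfCardEq (by have := hpos i; simp only [q]; omega)
  let g : α ≃ Ladder m q := (Equiv.sigmaFiberEquiv f).symm.trans (Equiv.sigmaCongrRight e)
  refine ⟨m, q, ⟨⟨g, fun {a b} => ?_⟩⟩⟩
  change f a < f b ∨ g a = g b ↔ a ≤ b
  rw [g.injective.eq_iff, hle]

theorem IsLadder.subtype_of_isLowerSet {β : Type*} [Fintype β] [PartialOrder β]
    (hL : IsLadder β) {S : Set β} (hS : IsLowerSet S) : IsLadder S := by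
  obtain ⟨k, q, ⟨e⟩⟩ := hL
  let r : S → ℕ := fun x => (e x).1
  set m := Finset.univ.sup fun x : S => r x + 1
  have hr : ∀ x, r x < m := fun x => Finset.le_sup (f := fun x : S => r x + 1) (Finset.mem_univ x)
  refine isLadder_of_rank (fun x => ⟨r x, hr x⟩) ?_ ?_ ?_
  · rintro ⟨i, hi⟩
    obtain ⟨x, -, hix⟩ := Finset.lt_sup_iff.1 hi
    rcases (Nat.lt_succ_iff.1 hix).eq_or_lt with rfl | hlt
    · exact ⟨x, rfl⟩
    · have hik : i < k := hlt.trans (e x).1.isLt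
      let y : Ladder k q := ⟨⟨i, hik⟩, 0⟩
      have hyx : e.symm y ≤ x := e.symm_apply_le.2 (Or.inl hlt)
      refine ⟨⟨_, hS hyx x.2⟩, Fin.ext ?_⟩
      change ((e (e.symm y)).1 : ℕ) = i
      rw [e.apply_symm_apply]
  · intro x y
    rw [← Subtype.coe_le_coe, ← e.le_iff_le, ← Subtype.coe_inj, ← e.injective.eq_iff]
    exact or_congr_left Fin.lt_def
  · intro i
    let pos : {x : S // (⟨r x, hr x⟩ : Fin m) = i} → Fin 2 := fun x =>
      ⟨(e x.1).2, by have := (e x.1).2.isLt; have := (q (e x.1).1).isLt; omega⟩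
    have hpos : Function.Injective pos := by
      rintro ⟨x, hx⟩ ⟨y, hy⟩ hxy
      have hlevel : (e x).1 = (e y).1 := Fin.ext (Fin.mk.inj (hx.trans hy.symm))
      exact Subtype.ext <| Subtype.ext <| e.injective <|
        Ladder.eq_iff.2 ⟨hlevel, congrArg Fin.val hxy⟩
    simpa using Fintype.card_le_of_injective pos hpos

end Ladder

section SumLex

variable {α β : Type*} [PartialOrder α] [PartialOrder β]

theorem isMax_toLex_inr_iff {b : β} : IsMax (toLex (Sum.inr b) : α ⊕ₗ β) ↔ IsMax b := by
  refine ⟨fun h c hc => Sum.Lex.inr_le_inr_iff.1 (h (Sum.Lex.inr_le_inr_iff.2 hc)), ?_⟩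
  intro h x hx
  obtain a | c := x
  · exact absurd hx Sum.Lex.not_inr_le_inl
  · exact Sum.Lex.inr_le_inr_iff.2 (h (Sum.Lex.inr_le_inr_iff.1 hx))

theorem card_isMax_sumLex_le [Finite β] [Nonempty β] :
    Nat.card {x : α ⊕ₗ β // IsMax x} ≤ Nat.card {b : β // IsMax b} := by
  refine Nat.card_le_card_of_surjective
    (fun b => ⟨toLex (Sum.inr b.1), isMax_toLex_inr_iff.2 b.2⟩) ?_
  rintro ⟨x, hx⟩
  obtain a | b := x
  · exact absurd (hx (Sum.Lex.inl_le_inr a (Classical.arbitrary β))) Sum.Lex.not_inr_le_inl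
  · exact ⟨⟨b, isMax_toLex_inr_iff.1 hx⟩, rfl⟩

def subtypeSumLexOrderIso (S : Set (α ⊕ₗ β)) :
    S ≃o {a // toLex (Sum.inl a) ∈ S} ⊕ₗ {b // toLex (Sum.inr b) ∈ S} where
  toEquiv := (Equiv.subtypeSum (p := fun c => toLex c ∈ S)).trans toLex
  map_rel_iff' := by
    rintro ⟨a | b, ha⟩ ⟨c | d, hc⟩
    · exact Sum.Lex.inl_le_inl_iff.trans (Subtype.mk_le_mk.trans Sum.Lex.inl_le_inl_iff.symm)
    · exact iff_of_true (Sum.Lex.inl_le_inr _ _) (Sum.Lex.inl_le_inr _ _)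
    · exact iff_of_false Sum.Lex.not_inr_le_inl Sum.Lex.not_inr_le_inl
    · exact Sum.Lex.inr_le_inr_iff.trans (Subtype.mk_le_mk.trans Sum.Lex.inr_le_inr_iff.symm)

end SumLex

/-- Let `P = F ⊕ L` with `F` a rooted forest and `L` a ladder,
and let `Q` be an upset of `P`.  Then `P \ Q` is again of the form `F' ⊕ L'` with
`F'` a rooted forest and `L'` a (possibly empty) ladder; moreover if `L' ≠ ∅`
then `P \ Q` has at most two maximal elements, and if `L' = ∅` then for every
`i ∈ P \ Q` the set `{j ∈ P \ Q : i ⪯ j}` is a chain. -/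
theorem stmt12 (F L : Type) [Fintype F] [PartialOrder F] [Fintype L] [PartialOrder L]
    (hF : IsRootedForest F) (hL : IsLadder L)
    (Q : Set (F ⊕ₗ L)) (hQ : ∀ a b : F ⊕ₗ L, a ∈ Q → a ≤ b → b ∈ Q) :
    ∃ (F' : Type) (iF : PartialOrder F') (jF : Fintype F')
      (k' : ℕ) (q' : Fin k' → Fin 2),
      haveI := iF
      haveI := jF
      IsRootedForest F' ∧
      Nonempty ({p : F ⊕ₗ L // p ∉ Q} ≃o (F' ⊕ₗ Ladder k' q')) ∧
      (k' ≠ 0 → Nat.card {s : {p : F ⊕ₗ L // p ∉ Q} // IsMax s} ≤ 2) ∧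
      (k' = 0 → ∀ i : {p : F ⊕ₗ L // p ∉ Q}, IsChain (· ≤ ·) {j | i ≤ j}) := by
  have hQc : IsLowerSet Qᶜ := IsUpperSet.compl fun a b hab ha => hQ a b ha hab
  have hF' : IsRootedForest (toLex ∘ Sum.inl ⁻¹' Qᶜ : Set F) :=
    hF.subtype_of_isLowerSet (hQc.preimage Sum.Lex.inl_mono)
  obtain ⟨k', q', ⟨eL⟩⟩ := hL.subtype_of_isLowerSet (hQc.preimage Sum.Lex.inr_mono)
  let iso : {p : F ⊕ₗ L // p ∉ Q} ≃o (toLex ∘ Sum.inl ⁻¹' Qᶜ : Set F) ⊕ₗ Ladder k' q' :=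
    (subtypeSumLexOrderIso Qᶜ).trans (OrderIso.sumLexCongr (OrderIso.refl _) eL)
  refine ⟨_, inferInstance, inferInstance, k', q', hF', ⟨iso⟩, fun hk => ?_, fun hk i => ?_⟩
  · have : Nonempty (Ladder k' q') := ⟨⟨⟨0, Nat.pos_of_ne_zero hk⟩, 0⟩⟩
    rw [Nat.card_congr (iso.toEquiv.subtypeEquiv fun _ => iso.isMax_apply.symm)]
    exact card_isMax_sumLex_le.trans Ladder.card_isMax_le_two
  · subst hk
    have : IsEmpty (Ladder 0 q') := ⟨fun a => a.1.elim0⟩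
    exact (hF'.of_orderIso (iso.trans OrderIso.sumLexEmpty)).isChain_Ici i

end PromoMC
end

section
/- Let P = F ⊕ L with F a forest and L a ladder, let π be a linear extension of P and k an element of P. Then the extended promotion ∂_{π^{-1}(k)} π equals the linear extension obtained from π by: deleting k and appending it at the end, then reordering the letters j ⪰ k so as to form a linear extension, swapping the relative order of the two incomparable elements at each size-2 level of the ladder above k. -/
open Matrix Kronecker
open scoped Classical

namespace PromoMC

variable {α : Type*} [Fintype α] [PartialOrder α]

/-!
Promotion `∂_m` slides a letter to the right: the letter `c` at position `m + j` is compared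
with the next letter `y` of `π`, and either `c ≤ y`, in which case `y` becomes the moving letter,
or `c` jumps over `y`. The moving letter therefore stays above `κ = π m`, and it jumps over
every later letter that is not above it: in particular over every letter not above `κ`, which
is thus shifted down by one. In `F ⊕ L` the letters above `κ` that are incomparable come in
pairs `u, v` of a ladder level with the same strict upper bounds; when the scan reaches `v`
the moving letter must be `u`, so `u` jumps over `v`, reversing the pair.
-/

lemma tau_eq_swap {i : ℕ} {π : Listing α} (h : i + 1 < Fintype.card α)
    (hπ : IncompRel (· ≤ ·) (π ⟨i, by omega⟩) (π ⟨i + 1, h⟩)) :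
    tau i π = (Equiv.swap (⟨i, by omega⟩ : Fin (Fintype.card α)) ⟨i + 1, h⟩).trans π := by
  rw [tau, dif_pos h]
  exact if_pos hπ

lemma tau_eq_self {i : ℕ} {π : Listing α} (h : i + 1 < Fintype.card α)
    (hπ : π ⟨i, by omega⟩ ≤ π ⟨i + 1, h⟩) : tau i π = π := by
  rw [tau, dif_pos h, if_neg fun hc => hc.1 hπ]

lemma tau_apply_of_ne {i : ℕ} (π : Listing α) {p : Fin (Fintype.card α)}
    (hi : (p : ℕ) ≠ i) (hi' : (p : ℕ) ≠ i + 1) : tau i π p = π p := by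
  unfold tau
  split_ifs
  · rw [Equiv.trans_apply, Equiv.swap_apply_of_ne_of_ne (Fin.ne_of_val_ne hi)
      (Fin.ne_of_val_ne hi')]
  all_goals rfl

lemma eq_of_swap_succ_lt_swap_succ {n i : ℕ} (h : i + 1 < n) {a b : Fin n}
    (hab : Equiv.swap (⟨i, by omega⟩ : Fin n) ⟨i + 1, h⟩ a <
      Equiv.swap (⟨i, by omega⟩ : Fin n) ⟨i + 1, h⟩ b) (hba : ¬ a < b) :
    a = ⟨i + 1, h⟩ ∧ b = ⟨i, by omega⟩ := by
  by_cases ha : a = ⟨i, by omega⟩ <;> by_cases ha' : a = ⟨i + 1, h⟩ <;>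
  by_cases hb : b = ⟨i, by omega⟩ <;> by_cases hb' : b = ⟨i + 1, h⟩ <;>
    simp_all [Equiv.swap_apply_of_ne_of_ne, Fin.lt_def, Fin.ext_iff] <;> omega

theorem isLinExt_tau {π : Listing α} (hπ : IsLinExt π) (i : ℕ) : IsLinExt (tau i π) := by
  unfold tau
  split_ifs with h hincomp
  · intro a b hab
    by_contra hba
    obtain ⟨ha, hb⟩ := eq_of_swap_succ_lt_swap_succ h (hπ _ _ hab) hba
    rw [ha, hb] at hab
    simp only [Equiv.trans_apply, Equiv.swap_apply_left, Equiv.swap_apply_right] at hab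
    exact hincomp.1 hab.le
  all_goals exact hπ

theorem isLinExt_foldl_tau {π : Listing α} (hπ : IsLinExt π) (l : List ℕ) :
    IsLinExt (l.foldl (fun σ i => tau i σ) π) := by
  induction l generalizing π with
  | nil => exact hπ
  | cons i l ih => exact ih (isLinExt_tau hπ i)

theorem IsLinExt.symm_lt {π : Listing α} (hπ : IsLinExt π) {x y : α} (h : x < y) :
    π.symm x < π.symm y :=
  hπ _ _ (by simpa using h)

theorem IsLinExt.not_le_of_symm_lt {π : Listing α} (hπ : IsLinExt π) {x y : α}
    (h : π.symm x < π.symm y) : ¬ y ≤ x := fun hyx =>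
  hyx.lt_or_eq.elim (fun hlt => (hπ.symm_lt hlt).not_gt h) (fun heq => h.ne (heq ▸ rfl))

lemma apply_mk_eq_of_val_eq {β : Type*} [Fintype β] {π : Listing β} {p : ℕ} {a : β}
    (h : p < Fintype.card β) (hp : p = π.symm a) : π ⟨p, h⟩ = a := by
  rw [← Equiv.eq_symm_apply]
  exact Fin.ext hp

section Scan

variable (π : Listing α) (m : ℕ)

noncomputable def scan (j : ℕ) : Listing α :=
  (List.range' m j).foldl (fun σ i => tau i σ) π

/-- After `j` steps of `∂_m` the letter still moving right sits at position `m + j`. -/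
noncomputable def carry (j : ℕ) (h : m + j < Fintype.card α) : α :=
  scan π m j ⟨m + j, h⟩

lemma scan_zero : scan π m 0 = π := rfl

lemma scan_succ (j : ℕ) : scan π m (j + 1) = tau (m + j) (scan π m j) := by
  simp [scan, List.range'_1_concat]

lemma promo_eq_scan : promo m π = scan π m (Fintype.card α - m) := by
  simp [promo, scan, List.range_eq_range', List.drop_range']

variable {π m}

lemma scan_apply_of_gt {j : ℕ} {p : Fin (Fintype.card α)} (hp : m + j < p) :
    scan π m j p = π p := by
  induction j with
  | zero => rfl
  | succ j ih => rw [scan_succ, tau_apply_of_ne _ (by omega) (by omega), ih (by omega)]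

lemma scan_apply_of_lt {j k : ℕ} {p : Fin (Fintype.card α)} (hp : p < m + j) (hjk : j ≤ k) :
    scan π m k p = scan π m j p := by
  induction k, hjk using Nat.le_induction with
  | base => rfl
  | succ k hjk ih => rw [scan_succ, tau_apply_of_ne _ (by omega) (by omega), ih]

lemma promo_apply_of_lt {j : ℕ} {p : Fin (Fintype.card α)} (hp : p < m + j) :
    promo m π p = scan π m j p := by
  rw [promo_eq_scan]
  rcases le_total j (Fintype.card α - m) with hj | hj
  · exact scan_apply_of_lt hp hj
  · exact (scan_apply_of_lt (by omega) hj).symm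

lemma symm_carry_le {j : ℕ} (h : m + j < Fintype.card α) :
    (π.symm (carry π m j h) : ℕ) ≤ m + j := by
  by_contra! hlt
  have hfix : scan π m j (π.symm (carry π m j h)) = scan π m j ⟨m + j, h⟩ := by
    rw [scan_apply_of_gt hlt, Equiv.apply_symm_apply, carry]
  exact hlt.ne' (congrArg Fin.val ((scan π m j).injective hfix))

lemma le_symm_promo_carry {j : ℕ} (h : m + j < Fintype.card α) :
    m + j ≤ ((promo m π).symm (carry π m j h) : ℕ) := by
  by_contra! hlt
  have hfix : promo m π ((promo m π).symm (carry π m j h)) = scan π m j ⟨m + j, h⟩ :=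
    Equiv.apply_symm_apply _ _
  rw [promo_apply_of_lt hlt] at hfix
  exact hlt.ne (congrArg Fin.val ((scan π m j).injective hfix))

section Step

variable {j : ℕ} (h : m + j + 1 < Fintype.card α)

lemma scan_succ_of_le (hle : carry π m j (by omega) ≤ π ⟨m + j + 1, h⟩) :
    scan π m (j + 1) = scan π m j := by
  rw [scan_succ]
  refine tau_eq_self h ?_
  rwa [scan_apply_of_gt (p := ⟨m + j + 1, h⟩) (by simp)]

lemma carry_succ_of_le (hle : carry π m j (by omega) ≤ π ⟨m + j + 1, h⟩) :
    carry π m (j + 1) h = π ⟨m + j + 1, h⟩ := by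
  rw [carry, scan_succ_of_le h hle]
  exact scan_apply_of_gt (p := ⟨m + j + 1, h⟩) (by simp)

lemma scan_succ_of_not_le (hπ : IsLinExt π)
    (hle : ¬ carry π m j (by omega) ≤ π ⟨m + j + 1, h⟩) :
    scan π m (j + 1) =
      (Equiv.swap (⟨m + j, by omega⟩ : Fin (Fintype.card α)) ⟨m + j + 1, h⟩).trans
        (scan π m j) := by
  have hnext : scan π m j ⟨m + j + 1, h⟩ = π ⟨m + j + 1, h⟩ :=
    scan_apply_of_gt (p := ⟨m + j + 1, h⟩) (by simp)
  have hge : ¬ π ⟨m + j + 1, h⟩ ≤ carry π m j (by omega) :=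
    hπ.not_le_of_symm_lt (by simpa [Fin.lt_def] using symm_carry_le (π := π) (by omega))
  rw [scan_succ]
  apply tau_eq_swap h
  rw [hnext]
  exact ⟨hle, hge⟩

lemma carry_succ_of_not_le (hπ : IsLinExt π)
    (hle : ¬ carry π m j (by omega) ≤ π ⟨m + j + 1, h⟩) :
    carry π m (j + 1) h = carry π m j (by omega) := by
  rw [carry, scan_succ_of_not_le h hπ hle]
  exact congrArg (scan π m j) (Equiv.swap_apply_right _ _)

lemma promo_apply_of_not_carry_le (hπ : IsLinExt π)
    (hle : ¬ carry π m j (by omega) ≤ π ⟨m + j + 1, h⟩) :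
    promo m π ⟨m + j, by omega⟩ = π ⟨m + j + 1, h⟩ := by
  rw [promo_apply_of_lt (j := j + 1) (by simp), scan_succ_of_not_le h hπ hle,
    Equiv.trans_apply, Equiv.swap_apply_left]
  exact scan_apply_of_gt (by simp)

end Step

lemma start_le_carry (hπ : IsLinExt π) {j : ℕ} (h : m + j < Fintype.card α) :
    π ⟨m, by omega⟩ ≤ carry π m j h := by
  induction j with
  | zero => rfl
  | succ j ih =>
    by_cases hle : carry π m j (by omega) ≤ π ⟨m + j + 1, h⟩
    · rw [carry_succ_of_le h hle]
      exact (ih _).trans hle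
    · rw [carry_succ_of_not_le h hπ hle]
      exact ih _

lemma not_carry_le_of_lt (hπ : IsLinExt π) {j : ℕ} (h : m + j < Fintype.card α) {y : α}
    (hcy : π.symm (carry π m j h) < π.symm y) (hy : (π.symm y : ℕ) ≤ m + j) :
    ¬ carry π m j h ≤ y := by
  induction j generalizing y with
  | zero =>
    simp only [carry, scan_zero, Equiv.symm_apply_apply, Fin.lt_def] at hcy
    omega
  | succ j ih =>
    by_cases hle : carry π m j (by omega) ≤ π ⟨m + j + 1, h⟩
    · rw [carry_succ_of_le h hle] at hcy ⊢
      simp only [Equiv.symm_apply_apply, Fin.lt_def] at hcy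
      omega
    · rw [carry_succ_of_not_le h hπ hle] at hcy ⊢
      rcases (Nat.lt_or_eq_of_le hy) with hy | hy
      · exact ih _ hcy (by omega)
      · rwa [π.symm_apply_eq.1 (Fin.ext hy : π.symm y = ⟨m + j + 1, h⟩)]

end Scan

/-- The ladder structure of `F ⊕ L` that promotion from `κ` sees: it only looks above `κ`. -/
structure IsLadderAbove {β : Type*} [Preorder β] (κ : β) : Prop where
  eq_of_incompRel ⦃x y z : β⦄ : κ ≤ x → κ ≤ y → κ ≤ z →
    IncompRel (· ≤ ·) x y → IncompRel (· ≤ ·) x z → y = z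
  lt_of_incompRel_of_lt ⦃x y z : β⦄ : κ ≤ x → κ ≤ y → IncompRel (· ≤ ·) x y → x < z → y < z

section Promotion

variable {π : Listing α}

lemma le_carry (hπ : IsLinExt π) (κ : α) {j : ℕ} (h : (π.symm κ : ℕ) + j < Fintype.card α) :
    κ ≤ carry π (π.symm κ) j h := by
  simpa using start_le_carry hπ h

lemma promo_symm_of_lt {m : ℕ} {a : α} (ha : (π.symm a : ℕ) < m) :
    (promo m π).symm a = π.symm a := by
  rw [Equiv.symm_apply_eq, promo_apply_of_lt (j := 0) ha, scan_zero, Equiv.apply_symm_apply]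

lemma promo_symm_of_not_le (hπ : IsLinExt π) {κ a : α} (ha : ¬ κ ≤ a)
    (hκa : π.symm κ < π.symm a) :
    ((promo (π.symm κ) π).symm a : ℕ) = (π.symm a : ℕ) - 1 := by
  obtain ⟨j, hj⟩ : ∃ j, (π.symm κ : ℕ) + j + 1 = π.symm a := ⟨π.symm a - 1 - π.symm κ, by omega⟩
  have h : (π.symm κ : ℕ) + j + 1 < Fintype.card α := hj ▸ (π.symm a).isLt
  have hy : π ⟨_, h⟩ = a := apply_mk_eq_of_val_eq h hj
  have hle : ¬ carry π (π.symm κ) j (by omega) ≤ π ⟨_, h⟩ := by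
    rw [hy]
    exact fun hca => ha ((le_carry hπ κ _).trans hca)
  have hpromo := promo_apply_of_not_carry_le h hπ hle
  rw [hy, ← Equiv.eq_symm_apply] at hpromo
  rw [← hpromo, Fin.val_mk]
  omega

lemma carry_eq_of_incompRel (hπ : IsLinExt π) {κ u v : α} (hU : IsLadderAbove κ)
    (hu : κ ≤ u) (hv : κ ≤ v) (huv : IncompRel (· ≤ ·) u v) (hlt : π.symm u < π.symm v) {j : ℕ}
    (h : (π.symm κ : ℕ) + j < Fintype.card α) (hj : (π.symm κ : ℕ) + j + 1 = π.symm v) :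
    carry π (π.symm κ) j h = u := by
  set c := carry π (π.symm κ) j h
  have hc : κ ≤ c := le_carry hπ κ h
  have hcpos : (π.symm c : ℕ) ≤ π.symm κ + j := symm_carry_le h
  rcases lt_trichotomy (π.symm c) (π.symm u) with hcu | hcu | hcu
  · -- `c` jumped over `u`, so `u` would be the partner of `c` as well as of `v`
    have huc : IncompRel (· ≤ ·) u c :=
      ⟨hπ.not_le_of_symm_lt hcu, not_carry_le_of_lt hπ h hcu (by omega)⟩
    have hvc := hU.eq_of_incompRel hu hv hc huv huc
    rw [← hvc] at hcpos
    omega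
  · exact π.symm.injective hcu
  · -- `c` comes after `u` and is not its partner, so it lies above `u`, hence above `v`
    have huc : u < c := by
      refine lt_of_le_of_ne ?_ (fun heq => hcu.ne (heq ▸ rfl))
      by_contra hnuc
      have hvc := hU.eq_of_incompRel hu hv hc huv ⟨hnuc, hπ.not_le_of_symm_lt hcu⟩
      rw [← hvc] at hcpos
      omega
    have hvc := hπ.symm_lt (hU.lt_of_incompRel_of_lt hu hv huv huc)
    rw [Fin.lt_def] at hvc
    omega

lemma symm_promo_lt_of_incompRel (hπ : IsLinExt π) {κ u v : α} (hU : IsLadderAbove κ)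
    (hu : κ ≤ u) (hv : κ ≤ v) (huv : IncompRel (· ≤ ·) u v) (hlt : π.symm u < π.symm v) :
    (promo (π.symm κ) π).symm v < (promo (π.symm κ) π).symm u := by
  have hκu : π.symm κ < π.symm u :=
    hπ.symm_lt (lt_of_le_of_ne hu fun heq => huv.1 (heq ▸ hv))
  obtain ⟨j, hj⟩ : ∃ j, (π.symm κ : ℕ) + j + 1 = π.symm v := ⟨π.symm v - 1 - π.symm κ, by omega⟩
  have h : (π.symm κ : ℕ) + j + 1 < Fintype.card α := hj ▸ (π.symm v).isLt
  have hcarry := carry_eq_of_incompRel hπ hU hu hv huv hlt (by omega) hj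
  have hy : π ⟨_, h⟩ = v := apply_mk_eq_of_val_eq h hj
  have hle : ¬ carry π (π.symm κ) j (by omega) ≤ π ⟨_, h⟩ := by
    rw [hcarry, hy]
    exact huv.1
  have hv' := promo_apply_of_not_carry_le h hπ hle
  rw [hy, ← Equiv.eq_symm_apply] at hv'
  have hu' := le_symm_promo_carry (π := π) (m := π.symm κ) (j := j + 1) h
  rw [carry_succ_of_not_le h hπ hle, hcarry] at hu'
  rw [Fin.lt_def, ← hv', Fin.val_mk]
  omega

lemma symm_promo_lt_iff_of_incompRel (hπ : IsLinExt π) {κ u v : α} (hU : IsLadderAbove κ)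
    (hu : κ ≤ u) (hv : κ ≤ v) (huv : IncompRel (· ≤ ·) u v) :
    (promo (π.symm κ) π).symm u < (promo (π.symm κ) π).symm v ↔ π.symm v < π.symm u := by
  refine ⟨fun h => ?_, symm_promo_lt_of_incompRel hπ hU hv hu huv.symm⟩
  rcases lt_trichotomy (π.symm u) (π.symm v) with hlt | heq | hgt
  · exact absurd h (symm_promo_lt_of_incompRel hπ hU hu hv huv hlt).asymm
  · exact absurd (π.symm.injective heq) huv.ne
  · exact hgt

end Promotion

lemma IncompRel.map_orderIso {β γ : Type*} [LE β] [LE γ] (e : β ≃o γ) {x y : β}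
    (h : IncompRel (· ≤ ·) x y) : IncompRel (· ≤ ·) (e x) (e y) :=
  ⟨fun hle => h.1 (e.le_iff_le.1 hle), fun hle => h.2 (e.le_iff_le.1 hle)⟩

namespace Ladder

variable {k : ℕ} {q : Fin k → Fin 2} {x y z : Ladder k q}

lemma fst_eq_of_incompRel (h : IncompRel (· ≤ ·) x y) : x.1 = y.1 := by
  by_contra hne
  rcases lt_or_gt_of_ne hne with hlt | hlt
  · exact h.1 (Or.inl hlt)
  · exact h.2 (Or.inl hlt)

lemma eq_of_incompRel_of_incompRel (hxy : IncompRel (· ≤ ·) x y)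
    (hxz : IncompRel (· ≤ ·) x z) : y = z := by
  obtain ⟨i, a⟩ := x
  obtain ⟨_, b⟩ := y
  obtain ⟨_, c⟩ := z
  obtain rfl := fst_eq_of_incompRel hxy
  obtain rfl := fst_eq_of_incompRel hxz
  have hb : (b : ℕ) ≠ a := fun h => hxy.2 (Or.inr (by rw [Fin.ext h]))
  have hc : (c : ℕ) ≠ a := fun h => hxz.2 (Or.inr (by rw [Fin.ext h]))
  -- a level has at most two elements
  have hq := (q i).isLt
  rw [Fin.ext (by omega : (b : ℕ) = c)]

lemma lt_of_incompRel_of_lt (hxy : IncompRel (· ≤ ·) x y) (hxz : x < z) : y < z := by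
  have hfst : x.1 < z.1 := hxz.le.resolve_right hxz.ne
  refine lt_of_le_of_ne (Or.inl (fst_eq_of_incompRel hxy ▸ hfst)) ?_
  rintro rfl
  exact hxy.1 hxz.le

end Ladder

namespace IsLadder

variable {L : Type*} [Fintype L] [PartialOrder L] {x y z : L}

lemma eq_of_incompRel_of_incompRel (hL : IsLadder L) (hxy : IncompRel (· ≤ ·) x y)
    (hxz : IncompRel (· ≤ ·) x z) : y = z := by
  obtain ⟨k, q, ⟨e⟩⟩ := hL
  exact e.injective (Ladder.eq_of_incompRel_of_incompRel (IncompRel.map_orderIso e hxy)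
    (IncompRel.map_orderIso e hxz))

lemma lt_of_incompRel_of_lt (hL : IsLadder L) (hxy : IncompRel (· ≤ ·) x y) (hxz : x < z) :
    y < z := by
  obtain ⟨k, q, ⟨e⟩⟩ := hL
  exact e.lt_iff_lt.1 (Ladder.lt_of_incompRel_of_lt (IncompRel.map_orderIso e hxy)
    (e.lt_iff_lt.2 hxz))

end IsLadder

theorem IsRootedForest.isChain_Ici_s13 {F : Type*} [PartialOrder F] [WellFoundedGT F]
    [IsStronglyAtomic F] (hF : IsRootedForest F) (a : F) : IsChain (· ≤ ·) (Set.Ici a) := by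
  induction a using WellFoundedGT.induction with
  | _ x ih =>
    intro b hb c hc _
    rcases (Set.mem_Ici.1 hb).lt_or_eq with hxb | rfl
    · rcases (Set.mem_Ici.1 hc).lt_or_eq with hxc | rfl
      · obtain ⟨b', hxb', hb'b⟩ := exists_covBy_le_of_lt hxb
        obtain ⟨c', hxc', hc'c⟩ := exists_covBy_le_of_lt hxc
        obtain rfl := hF x b' c' hxb' hxc'
        exact (ih b' hxb'.lt).total hb'b hc'c
      · exact Or.inr hb
    · exact Or.inl hc

section SumLex

variable {F L : Type*} [PartialOrder F] [WellFoundedGT F] [IsStronglyAtomic F] [PartialOrder L]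

lemma exists_inr_of_incompRel (hF : IsRootedForest F) {κ x y : F ⊕ₗ L} (hx : κ ≤ x) (hy : κ ≤ y)
    (hxy : IncompRel (· ≤ ·) x y) : ∃ a b : L, x = toLex (Sum.inr a) ∧ y = toLex (Sum.inr b) := by
  rcases x with fx | lx <;> rcases y with fy | ly
  · rcases κ with fκ | lκ
    · exact ((hF.isChain_Ici_s13 fκ).total (Sum.Lex.inl_le_inl_iff.1 hx)
        (Sum.Lex.inl_le_inl_iff.1 hy)).elim
        (fun h => (hxy.1 (Sum.Lex.inl_le_inl_iff.2 h)).elim)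
        (fun h => (hxy.2 (Sum.Lex.inl_le_inl_iff.2 h)).elim)
    · exact (Sum.Lex.not_inr_le_inl hx).elim
  · exact (hxy.1 (Sum.Lex.inl_le_inr fx ly)).elim
  · exact (hxy.2 (Sum.Lex.inl_le_inr fy lx)).elim
  · exact ⟨lx, ly, rfl, rfl⟩

theorem isLadderAbove_sumLex [Fintype L] (hF : IsRootedForest F) (hL : IsLadder L)
    (κ : F ⊕ₗ L) : IsLadderAbove κ where
  eq_of_incompRel x y z hx hy hz hxy hxz := by
    obtain ⟨a, b, rfl, rfl⟩ := exists_inr_of_incompRel hF hx hy hxy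
    obtain ⟨-, c, -, rfl⟩ := exists_inr_of_incompRel hF hx hz hxz
    rw [hL.eq_of_incompRel_of_incompRel (x := a) (y := b) (z := c) (by simpa [IncompRel] using hxy)
      (by simpa [IncompRel] using hxz)]
  lt_of_incompRel_of_lt x y z hx hy hxy hxz := by
    obtain ⟨a, b, rfl, rfl⟩ := exists_inr_of_incompRel hF hx hy hxy
    rcases z with fz | lz
    · exact (Sum.Lex.not_inr_le_inl hxz.le).elim
    · exact Sum.Lex.inr_lt_inr_iff.2 (hL.lt_of_incompRel_of_lt (by simpa [IncompRel] using hxy)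
        (Sum.Lex.inr_lt_inr_iff.1 hxz))

end SumLex

/-- Let `P = F ⊕ L` with `F` a forest and `L` a ladder, `π` a
linear extension of `P` and `κ ∈ P`.  Then `σ := ∂_{π⁻¹(κ)} π` is the linear
extension obtained from `π` by moving `κ` to the end and reordering the letters
`j ⪰ κ`, swapping the relative order of the incomparable pair at each size-2
ladder level above `κ`.  Concretely: `σ` is a linear extension; every letter
`a ⋡ κ` keeps its position (shifted down by one if it was after `κ`); and any
two incomparable letters `u, v ⪰ κ` appear in `σ` in the opposite relative
order to that in `π`. -/
theorem stmt13 (F L : Type) [Fintype F] [PartialOrder F] [Fintype L] [PartialOrder L]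
    (hF : IsRootedForest F) (hL : IsLadder L)
    (π : Listing (F ⊕ₗ L)) (hπ : IsLinExt π) (κ : F ⊕ₗ L) :
    IsLinExt (promo ((π.symm κ : Fin (Fintype.card (F ⊕ₗ L))) : ℕ) π) ∧
    (∀ a : F ⊕ₗ L, ¬ κ ≤ a →
      (π.symm a < π.symm κ →
        (promo ((π.symm κ : Fin (Fintype.card (F ⊕ₗ L))) : ℕ) π).symm a = π.symm a) ∧
      (π.symm κ < π.symm a →
        (((promo ((π.symm κ : Fin (Fintype.card (F ⊕ₗ L))) : ℕ) π).symm a : ℕ)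
          = (π.symm a : ℕ) - 1))) ∧
    (∀ u v : F ⊕ₗ L, κ ≤ u → κ ≤ v → ¬ u ≤ v → ¬ v ≤ u →
      ((promo ((π.symm κ : Fin (Fintype.card (F ⊕ₗ L))) : ℕ) π).symm u
          < (promo ((π.symm κ : Fin (Fintype.card (F ⊕ₗ L))) : ℕ) π).symm v
        ↔ π.symm v < π.symm u)) := by
  have hU : IsLadderAbove κ := isLadderAbove_sumLex hF hL κ
  exact ⟨isLinExt_foldl_tau hπ _,
    fun a ha => ⟨promo_symm_of_lt, promo_symm_of_not_le hπ ha⟩,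
    fun u v hu hv huv hvu => symm_promo_lt_iff_of_incompRel hπ hU hu hv ⟨huv, hvu⟩⟩

end PromoMC
end

section
/- Let A be an n×n matrix and define B = A ⊗ [[0,1],[1,0]] + I_n ⊗ [[y, x],[y, x]] for scalars x, y. If v is an eigenvector of A with eigenvalue μ, then v ⊗ (1,1)^T is an eigenvector of B with eigenvalue μ + x + y, and v ⊗ ((−x, y)^T − μ(1,−1)^T) is an eigenvector of B with eigenvalue −μ. -/
open Matrix Kronecker

/-- (Spectral doubling step.)  Let
`B = A ⊗ [[0,1],[1,0]] + I ⊗ [[y,x],[y,x]]`.  If `A v = μ v`, then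
`v ⊗ (1,1)ᵀ` is an eigenvector of `B` with eigenvalue `μ + x + y`, and
`v ⊗ ((−x, y)ᵀ − μ (1, −1)ᵀ)` is an eigenvector of `B` with eigenvalue `−μ`. -/
theorem stmt18 {n : ℕ} (A : Matrix (Fin n) (Fin n) ℝ) (x y μ : ℝ) (v : Fin n → ℝ)
    (hv : A.mulVec v = μ • v) :
    (A ⊗ₖ (!![0, 1; 1, 0] : Matrix (Fin 2) (Fin 2) ℝ)
        + (1 : Matrix (Fin n) (Fin n) ℝ) ⊗ₖ !![y, x; y, x]).mulVec
      (fun p => v p.1 * (![1, 1] : Fin 2 → ℝ) p.2)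
      = (μ + x + y) • (fun p : Fin n × Fin 2 => v p.1 * (![1, 1] : Fin 2 → ℝ) p.2) ∧
    (A ⊗ₖ (!![0, 1; 1, 0] : Matrix (Fin 2) (Fin 2) ℝ)
        + (1 : Matrix (Fin n) (Fin n) ℝ) ⊗ₖ !![y, x; y, x]).mulVec
      (fun p => v p.1 * ((![-x, y] : Fin 2 → ℝ) - μ • (![1, -1] : Fin 2 → ℝ)) p.2)
      = (-μ) • (fun p : Fin n × Fin 2 =>
          v p.1 * ((![-x, y] : Fin 2 → ℝ) - μ • (![1, -1] : Fin 2 → ℝ)) p.2) := by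
  have hA : ∀ i, ∑ k, A i k * v k = μ * v i := fun i => by
    have := congrFun hv i
    simpa [mulVec, dotProduct] using this
  constructor <;>
  · funext ⟨i, j⟩
    fin_cases j <;>
    · simp only [mulVec, dotProduct, Fintype.sum_prod_type, Fin.sum_univ_two,
        Matrix.add_apply, kroneckerMap_apply, Matrix.one_apply, Pi.smul_apply,
        Pi.sub_apply, smul_eq_mul, Matrix.cons_val', Matrix.cons_val_zero,
        Matrix.cons_val_one, Matrix.head_cons, Matrix.empty_val',
        Matrix.cons_val_fin_one, Matrix.head_fin_const]
      simp only [mul_zero, mul_one, zero_mul, one_mul, zero_add, add_zero,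
        Matrix.cons_val_zero, Matrix.cons_val_one, Matrix.head_cons]
      simp only [Fin.mk_zero, Fin.mk_one, Matrix.cons_val_zero, Matrix.cons_val_one,
        Matrix.head_cons, Matrix.of_apply, Matrix.cons_val', Matrix.empty_val',
        Matrix.cons_val_fin_one, Matrix.vecHead]
      simp only [mul_zero, zero_add, add_zero, mul_one, zero_mul, ite_mul, one_mul,
        add_mul, mul_assoc]
      simp only [← Finset.mul_sum, Finset.sum_add_distrib, Finset.sum_ite_eq,
        Finset.mem_univ, if_true, ← mul_assoc, ← Finset.sum_mul]
      rw [show (∑ k, A i k * v k) = μ * v i from hA i]; ring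
end
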